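/- (Generating function factorization underlying the symmetries) Let d be an odd positive integer, χ : ℤ → ℂ d-periodic, ξ ∈ ℂ with ξ^{d w_i w_j}+1 ≠ 0 for all i≠j, and w₁,w₂,w₃ odd positive integers. Then in ℂ[[t]]: [(2 e^{w₁w₂w₃(y₁+y₂)t}(ξ^{dw₁w₂w₃} e^{dw₁w₂w₃ t}+1)) / ((ξ^{dw₂w₃} e^{dw₂w₃ t}+1)(ξ^{dw₁w₃} e^{dw₁w₃ t}+1)(ξ^{dw₁w₂} e^{dw₁w₂ t}+1))] · ∏_{(i,j) ∈ {(2,3),(1,3),(1,2)}} (∑_{a=0}^{d-1} (−1)^a χ(a) ξ^{a w_i w_j} e^{a w_i w_j t}) equals (∑_{k≥0} E_{k,χ,ξ^{w₂w₃}}(w₁y₁)(w₂w₃t)^k/k!) · (∑_{l≥0} E_{l,χ,ξ^{w₁w₃}}(w₂y₂)(w₁w₃t)^l/l!) · (∑_{m≥0} T_m(w₃d−1;χ,ξ^{w₁w₂})(w₁w₂t)^m/m!). -/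

import Mathlib

open Finset PowerSeries

/-- Generating function of the generalized twisted Euler polynomials:
`2 e^{xt} (ξ^d e^{dt}+1)⁻¹ ∑_{a=0}^{d-1} (-1)^a χ(a) ξ^a e^{at}` in `ℂ[[t]]`. -/
noncomputable def Egf (d : ℕ) (χ : ℤ → ℂ) (ξ x : ℂ) : PowerSeries ℂ :=
  2 * rescale x (exp ℂ) * (ξ ^ d • rescale (d : ℂ) (exp ℂ) + 1)⁻¹ *
    ∑ a ∈ Finset.range d, ((-1 : ℂ) ^ a * χ a * ξ ^ a) • rescale (a : ℂ) (exp ℂ)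

/-- The generalized twisted Euler polynomial `E_{n,χ,ξ}(x)`. -/
noncomputable def E (d : ℕ) (χ : ℤ → ℂ) (ξ x : ℂ) (n : ℕ) : ℂ :=
  (n.factorial : ℂ) * PowerSeries.coeff n (Egf d χ ξ x)

/-- The alternating generalized twisted power sum `T_k(m; χ, ξ)`. -/
noncomputable def T (m : ℕ) (χ : ℤ → ℂ) (ξ : ℂ) (k : ℕ) : ℂ :=
  ∑ a ∈ Finset.range (m + 1), (-1 : ℂ) ^ a * χ a * ξ ^ a * (a : ℂ) ^ k

/-!
Rescaling `t ↦ c t` turns the generating function of `E_{·,χ,ξ^c}(x)` into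
`2 e^{xct} (ξ^{dc} e^{dct} + 1)⁻¹ ∑_{a<d} (-1)^a χ(a) ξ^{ac} e^{act}`, and turns the exponential
generating function of `T_·(wd - 1; χ, ξ^c)` into `∑_{a<wd} (-1)^a χ(a) ξ^{ac} e^{act}`.
Since `d` is odd and `χ` is `d`-periodic, shifting `a` by `d` multiplies a summand by
`-ξ^{dc} e^{dct}`, so for odd `w` the geometric series gives
`∑_{a<wd} = (ξ^{dcw} e^{dcwt} + 1) (ξ^{dc} e^{dct} + 1)⁻¹ ∑_{a<d}`. Substituting the three
factors, the two exponentials multiply to `e^{w₁w₂w₃(y₁+y₂)t}` and both sides agree.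
-/

namespace PowerSeries

theorem rescale_smul {R : Type*} [CommSemiring R] (c r : R) (f : R⟦X⟧) :
    rescale c (r • f) = r • rescale c f := by
  ext n
  rw [coeff_rescale, coeff_smul, coeff_smul, coeff_rescale, smul_eq_mul, smul_eq_mul,
    mul_left_comm]

theorem constantCoeff_rescale {R : Type*} [CommSemiring R] (c : R) (f : R⟦X⟧) :
    constantCoeff (rescale c f) = constantCoeff f := by
  rw [← coeff_zero_eq_constantCoeff_apply, coeff_rescale, pow_zero, one_mul,
    coeff_zero_eq_constantCoeff_apply]

theorem rescale_inv {k : Type*} [Field k] (c : k) (φ : k⟦X⟧) :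
    rescale c φ⁻¹ = (rescale c φ)⁻¹ := by
  have hcc := constantCoeff_rescale c φ
  by_cases h : constantCoeff φ = 0
  · rw [inv_eq_zero.mpr h, inv_eq_zero.mpr (hcc.trans h), map_zero]
  · rw [eq_inv_iff_mul_eq_one (hcc ▸ h), ← map_mul, PowerSeries.inv_mul_cancel _ h, map_one]

theorem rescale_exp_pow {A : Type*} [CommRing A] [Algebra ℚ A] (a : A) (n : ℕ) :
    rescale a (exp A) ^ n = rescale (n * a) (exp A) := by
  rw [← map_pow, exp_pow_eq_rescale_exp, rescale_rescale, mul_comm]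

end PowerSeries

noncomputable def twistedExpSum (n : ℕ) (χ : ℤ → ℂ) (η : ℂ) : ℂ⟦X⟧ :=
  ∑ a ∈ range n, ((-1 : ℂ) ^ a * χ a * η ^ a) • rescale (a : ℂ) (exp ℂ)

theorem Egf_eq_mul_twistedExpSum (d : ℕ) (χ : ℤ → ℂ) (η x : ℂ) :
    Egf d χ η x = 2 * rescale x (exp ℂ) * (η ^ d • rescale (d : ℂ) (exp ℂ) + 1)⁻¹ *
      twistedExpSum d χ η := rfl

theorem mk_E_eq_rescale_Egf (d : ℕ) (χ : ℤ → ℂ) (η x c : ℂ) :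
    mk (fun k => E d χ η x k * c ^ k / k.factorial) = rescale c (Egf d χ η x) := by
  ext k
  have : (k.factorial : ℂ) ≠ 0 := mod_cast k.factorial_ne_zero
  rw [coeff_mk, coeff_rescale, E]
  field_simp

theorem mk_T_eq_rescale_twistedExpSum (n : ℕ) (χ : ℤ → ℂ) (η c : ℂ) :
    mk (fun m => T n χ η m * c ^ m / m.factorial) = rescale c (twistedExpSum (n + 1) χ η) := by
  ext m
  simp only [coeff_mk, coeff_rescale, twistedExpSum, T, map_sum, coeff_smul, coeff_exp,
    sum_mul, sum_div, smul_eq_mul]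
  refine sum_congr rfl fun a _ => ?_
  simp only [one_div, map_inv₀, map_natCast]
  ring

section Periodicity

variable {d : ℕ} {χ : ℤ → ℂ} {η : ℂ}

theorem twistedExpSum_period_add (hd : Odd d) (hχ : Function.Periodic χ d) (n : ℕ) :
    twistedExpSum (d + n) χ η =
      twistedExpSum d χ η - η ^ d • rescale (d : ℂ) (exp ℂ) * twistedExpSum n χ η := by
  rw [twistedExpSum, sum_range_add, twistedExpSum, twistedExpSum, mul_sum, sub_eq_add_neg,
    ← sum_neg_distrib]
  congr 1
  refine sum_congr rfl fun a _ => ?_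
  have hχa : χ ((d + a : ℕ) : ℤ) = χ a := by push_cast; rw [add_comm]; exact hχ a
  rw [hχa, pow_add, pow_add, hd.neg_one_pow, Nat.cast_add, ← exp_mul_exp_eq_exp_add]
  simp only [smul_eq_C_mul, map_mul, map_neg, map_one]
  ring

theorem twistedExpSum_mul_mul (hd : Odd d) (hχ : Function.Periodic χ d) (w : ℕ) :
    twistedExpSum (w * d) χ η * (η ^ d • rescale (d : ℂ) (exp ℂ) + 1) =
      (1 - (-(η ^ d • rescale (d : ℂ) (exp ℂ))) ^ w) * twistedExpSum d χ η := by
  induction w with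
  | zero => simp [twistedExpSum]
  | succ w ih =>
    rw [add_one_mul, add_comm, twistedExpSum_period_add hd hχ]
    linear_combination (-(η ^ d • rescale (d : ℂ) (exp ℂ))) * ih

theorem twistedExpSum_mul_mul_of_odd (hd : Odd d) (hχ : Function.Periodic χ d) {w : ℕ}
    (hw : Odd w) :
    twistedExpSum (w * d) χ η * (η ^ d • rescale (d : ℂ) (exp ℂ) + 1) =
      (η ^ (w * d) • rescale ((w * d : ℕ) : ℂ) (exp ℂ) + 1) * twistedExpSum d χ η := by
  rw [twistedExpSum_mul_mul hd hχ, hw.neg_pow, smul_pow, rescale_exp_pow, ← pow_mul',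
    Nat.cast_mul, sub_neg_eq_add, add_comm 1]

theorem twistedExpSum_mul_eq_mul_inv_of_odd (hd : Odd d)
    (hχ : Function.Periodic χ d) (hη : η ^ d + 1 ≠ 0) {w : ℕ} (hw : Odd w) :
    twistedExpSum (w * d) χ η = (η ^ (w * d) • rescale ((w * d : ℕ) : ℂ) (exp ℂ) + 1) *
      (η ^ d • rescale (d : ℂ) (exp ℂ) + 1)⁻¹ * twistedExpSum d χ η := by
  have hunit : constantCoeff (η ^ d • rescale (d : ℂ) (exp ℂ) + 1) ≠ 0 := by
    simpa [constantCoeff_rescale] using hη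
  rw [mul_right_comm, eq_mul_inv_iff_mul_eq hunit, twistedExpSum_mul_mul_of_odd hd hχ hw]

end Periodicity

theorem rescale_natCast_twistedExpSum (n c : ℕ) (χ : ℤ → ℂ) (ξ : ℂ) :
    rescale (c : ℂ) (twistedExpSum n χ (ξ ^ c)) =
      ∑ a ∈ range n, ((-1 : ℂ) ^ a * χ a * ξ ^ (a * c)) • rescale ((a * c : ℕ) : ℂ) (exp ℂ) := by
  simp only [twistedExpSum, map_sum, rescale_smul, rescale_rescale, ← pow_mul', ← Nat.cast_mul]

theorem rescale_natCast_Egf (d c : ℕ) (χ : ℤ → ℂ) (ξ x : ℂ) :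
    rescale (c : ℂ) (Egf d χ (ξ ^ c) x) =
      2 * rescale (x * c) (exp ℂ) * (ξ ^ (d * c) • rescale ((d * c : ℕ) : ℂ) (exp ℂ) + 1)⁻¹ *
        ∑ a ∈ range d, ((-1 : ℂ) ^ a * χ a * ξ ^ (a * c)) • rescale ((a * c : ℕ) : ℂ) (exp ℂ) := by
  simp only [Egf_eq_mul_twistedExpSum, map_mul, map_ofNat, rescale_inv, map_add, map_one,
    rescale_smul, rescale_rescale, rescale_natCast_twistedExpSum, ← pow_mul', ← Nat.cast_mul]

theorem rescale_natCast_twistedExpSum_mul_of_odd {d : ℕ} {χ : ℤ → ℂ} (hd : Odd d)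
    (hχ : Function.Periodic χ d) {c : ℕ} {ξ : ℂ} (hξ : ξ ^ (d * c) + 1 ≠ 0) {w : ℕ}
    (hw : Odd w) :
    rescale (c : ℂ) (twistedExpSum (w * d) χ (ξ ^ c)) =
      (ξ ^ (d * c * w) • rescale ((d * c * w : ℕ) : ℂ) (exp ℂ) + 1) *
        (ξ ^ (d * c) • rescale ((d * c : ℕ) : ℂ) (exp ℂ) + 1)⁻¹ *
        ∑ a ∈ range d, ((-1 : ℂ) ^ a * χ a * ξ ^ (a * c)) • rescale ((a * c : ℕ) : ℂ) (exp ℂ) := by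
  rw [twistedExpSum_mul_eq_mul_inv_of_odd hd hχ (by rwa [← pow_mul, mul_comm]) hw]
  simp only [map_mul, rescale_inv, map_add, map_one, rescale_smul, rescale_rescale,
    rescale_natCast_twistedExpSum, ← pow_mul', ← Nat.cast_mul]
  rw [show w * d * c = d * c * w by ring]

theorem lambda23_one_factorization_general (d w₁ w₂ w₃ : ℕ) (hd : Odd d) (hd0 : 0 < d)
    (hw₃ : Odd w₃) (hw₃0 : 0 < w₃)
    (χ : ℤ → ℂ) (hχ : Function.Periodic χ (d : ℤ)) (ξ : ℂ)
    (hξ₃ : ξ ^ (d * w₁ * w₂) + 1 ≠ 0)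
    (y₁ y₂ : ℂ) :
    (4 : PowerSeries ℂ) *
        rescale (((w₁ * w₂ * w₃ : ℕ) : ℂ) * (y₁ + y₂)) (exp ℂ) *
        (ξ ^ (d * w₁ * w₂ * w₃) • rescale ((d * w₁ * w₂ * w₃ : ℕ) : ℂ) (exp ℂ) + 1) *
        (ξ ^ (d * w₂ * w₃) • rescale ((d * w₂ * w₃ : ℕ) : ℂ) (exp ℂ) + 1)⁻¹ *
        (ξ ^ (d * w₁ * w₃) • rescale ((d * w₁ * w₃ : ℕ) : ℂ) (exp ℂ) + 1)⁻¹ *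
        (ξ ^ (d * w₁ * w₂) • rescale ((d * w₁ * w₂ : ℕ) : ℂ) (exp ℂ) + 1)⁻¹ *
        (∑ a ∈ Finset.range d,
          ((-1 : ℂ) ^ a * χ a * ξ ^ (a * w₂ * w₃)) • rescale ((a * w₂ * w₃ : ℕ) : ℂ) (exp ℂ)) *
        (∑ a ∈ Finset.range d,
          ((-1 : ℂ) ^ a * χ a * ξ ^ (a * w₁ * w₃)) • rescale ((a * w₁ * w₃ : ℕ) : ℂ) (exp ℂ)) *
        (∑ a ∈ Finset.range d,
          ((-1 : ℂ) ^ a * χ a * ξ ^ (a * w₁ * w₂)) • rescale ((a * w₁ * w₂ : ℕ) : ℂ) (exp ℂ)) =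
      PowerSeries.mk (fun k =>
          E d χ (ξ ^ (w₂ * w₃)) ((w₁ : ℂ) * y₁) k * ((w₂ * w₃ : ℕ) : ℂ) ^ k / (k.factorial : ℂ)) *
        PowerSeries.mk (fun l =>
          E d χ (ξ ^ (w₁ * w₃)) ((w₂ : ℂ) * y₂) l * ((w₁ * w₃ : ℕ) : ℂ) ^ l / (l.factorial : ℂ)) *
        PowerSeries.mk (fun m =>
          T (w₃ * d - 1) χ (ξ ^ (w₁ * w₂)) m * ((w₁ * w₂ : ℕ) : ℂ) ^ m / (m.factorial : ℂ)) := by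
  have hlen : w₃ * d - 1 + 1 = w₃ * d := Nat.sub_add_cancel (Nat.mul_pos hw₃0 hd0)
  have hexp : rescale ((w₁ : ℂ) * y₁ * ((w₂ * w₃ : ℕ) : ℂ)) (exp ℂ) *
      rescale ((w₂ : ℂ) * y₂ * ((w₁ * w₃ : ℕ) : ℂ)) (exp ℂ) =
      rescale (((w₁ * w₂ * w₃ : ℕ) : ℂ) * (y₁ + y₂)) (exp ℂ) := by
    rw [exp_mul_exp_eq_exp_add]
    congr 2
    push_cast
    ring
  rw [mk_E_eq_rescale_Egf, mk_E_eq_rescale_Egf, mk_T_eq_rescale_twistedExpSum, hlen,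
    rescale_natCast_twistedExpSum_mul_of_odd hd hχ (by rwa [← mul_assoc]) hw₃,
    rescale_natCast_Egf, rescale_natCast_Egf, ← hexp]
  simp only [mul_assoc]
  ring

/-- The evaluation of `I(Λ₂₃¹)`: the closed form of the quotient of fermionic integrals
equals the product of the three exponential generating functions. -/
theorem lambda23_one_factorization (d w₁ w₂ w₃ : ℕ) (hd : Odd d) (hd0 : 0 < d)
    (hw₁ : Odd w₁) (hw₂ : Odd w₂) (hw₃ : Odd w₃)
    (hw₁0 : 0 < w₁) (hw₂0 : 0 < w₂) (hw₃0 : 0 < w₃)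
    (χ : ℤ → ℂ) (hχ : Function.Periodic χ (d : ℤ)) (ξ : ℂ)
    (hξ₁ : ξ ^ (d * w₂ * w₃) + 1 ≠ 0) (hξ₂ : ξ ^ (d * w₁ * w₃) + 1 ≠ 0)
    (hξ₃ : ξ ^ (d * w₁ * w₂) + 1 ≠ 0)
    (y₁ y₂ : ℂ) :
    (4 : PowerSeries ℂ) *
        rescale (((w₁ * w₂ * w₃ : ℕ) : ℂ) * (y₁ + y₂)) (exp ℂ) *
        (ξ ^ (d * w₁ * w₂ * w₃) • rescale ((d * w₁ * w₂ * w₃ : ℕ) : ℂ) (exp ℂ) + 1) *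
        (ξ ^ (d * w₂ * w₃) • rescale ((d * w₂ * w₃ : ℕ) : ℂ) (exp ℂ) + 1)⁻¹ *
        (ξ ^ (d * w₁ * w₃) • rescale ((d * w₁ * w₃ : ℕ) : ℂ) (exp ℂ) + 1)⁻¹ *
        (ξ ^ (d * w₁ * w₂) • rescale ((d * w₁ * w₂ : ℕ) : ℂ) (exp ℂ) + 1)⁻¹ *
        (∑ a ∈ Finset.range d,
          ((-1 : ℂ) ^ a * χ a * ξ ^ (a * w₂ * w₃)) • rescale ((a * w₂ * w₃ : ℕ) : ℂ) (exp ℂ)) *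
        (∑ a ∈ Finset.range d,
          ((-1 : ℂ) ^ a * χ a * ξ ^ (a * w₁ * w₃)) • rescale ((a * w₁ * w₃ : ℕ) : ℂ) (exp ℂ)) *
        (∑ a ∈ Finset.range d,
          ((-1 : ℂ) ^ a * χ a * ξ ^ (a * w₁ * w₂)) • rescale ((a * w₁ * w₂ : ℕ) : ℂ) (exp ℂ)) =
      PowerSeries.mk (fun k =>
          E d χ (ξ ^ (w₂ * w₃)) ((w₁ : ℂ) * y₁) k * ((w₂ * w₃ : ℕ) : ℂ) ^ k / (k.factorial : ℂ)) *
        PowerSeries.mk (fun l =>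
          E d χ (ξ ^ (w₁ * w₃)) ((w₂ : ℂ) * y₂) l * ((w₁ * w₃ : ℕ) : ℂ) ^ l / (l.factorial : ℂ)) *
        PowerSeries.mk (fun m =>
          T (w₃ * d - 1) χ (ξ ^ (w₁ * w₂)) m * ((w₁ * w₂ : ℕ) : ℂ) ^ m / (m.factorial : ℂ)) :=
  lambda23_one_factorization_general d w₁ w₂ w₃ hd hd0 hw₃ hw₃0 χ hχ ξ hξ₃ y₁ y₂
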